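/- Let n ≥ 2 and a, b ∈ (ℂ*)^{n−1}, and let M be the n×n 'cross-shaped' matrix with first row (0, a₁, …, a_{n−1}), first column (0, b₁, …, b_{n−1})ᵀ, and zeros elsewhere. For an integer d ≥ 1, the map x ↦ x + (Mx)^d has Jacobian identically 1 if and only if a₁ b₁^d + a₂ b₂^d + ⋯ + a_{n−1} b_{n−1}^d = 0; and in that case the inverse of f = x + (Mx)^d is x = f − (M(f − (Mf)^d))^d. -/

import Mathlib

open Matrix BigOperators

/-- Jacobian determinant of a map `f : ℂ^ι → ℂ^ι` at `x`. -/
noncomputable def jacDet {ι : Type*} [Fintype ι] [DecidableEq ι]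
    (f : (ι → ℂ) → (ι → ℂ)) (x : ι → ℂ) : ℂ :=
  (LinearMap.toMatrix (Pi.basisFun ℂ ι) (Pi.basisFun ℂ ι)
    (fderiv ℂ f x).toLinearMap).det

/-- The map `x ↦ x + φ(Ax)`, with `φ` applied entrywise. -/
noncomputable def phiMap {ι : Type*} [Fintype ι] (A : Matrix ι ι ℂ) (φ : ℂ → ℂ)
    (x : ι → ℂ) : ι → ℂ :=
  fun j => x j + φ (A.mulVec x j)

/-- Domain of definition of `x ↦ x + φ(Ax)` for `φ` defined on `Ω`. -/
def phiDom {ι : Type*} [Fintype ι] (A : Matrix ι ι ℂ) (Ω : Set ℂ) : Set (ι → ℂ) :=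
  {x | ∀ j, A.mulVec x j ∈ Ω}

/-- `(A, φ)` is a good pair: the Jacobian of `x + φ(Ax)` is identically a nonzero constant. -/
def IsGoodPair {ι : Type*} [Fintype ι] [DecidableEq ι]
    (A : Matrix ι ι ℂ) (Ω : Set ℂ) (φ : ℂ → ℂ) : Prop :=
  ∃ c : ℂ, c ≠ 0 ∧ ∀ x ∈ phiDom A Ω, jacDet (phiMap A φ) x = c

/-- A matrix is universal if it forms a good pair with every analytic function. -/
def IsUniversal {ι : Type*} [Fintype ι] [DecidableEq ι] (A : Matrix ι ι ℂ) : Prop :=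
  ∀ (Ω : Set ℂ) (φ : ℂ → ℂ), IsOpen Ω → Ω.Nonempty → IsPreconnected Ω →
    AnalyticOn ℂ φ Ω → (phiDom A Ω).Nonempty → IsGoodPair A Ω φ

/-- The principal minor of `A` indexed by `I`. -/
noncomputable def principalMinor {ι : Type*} [DecidableEq ι] (A : Matrix ι ι ℂ)
    (I : Finset ι) : ℂ :=
  (A.submatrix (fun i : I => (i : ι)) (fun i : I => (i : ι))).det

/-!
Write `M = e₀ aᵀ + b e₀ᵀ` (with `a`, `b` padded by a leading zero). The Jacobian matrix of
`x ↦ x + (Mx)^d` is `1 + D M` with `D` diagonal, a rank-two perturbation of the identity, so its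
determinant reduces to a `2 × 2` determinant and equals
`1 - d² ((Mx)₀ x₀)^(d-1) ∑ aₖ bₖ^d`; evaluating at a point with `x₀ = (Mx)₀ = 1` gives the
equivalence. For the inverse, `(Mx)ₖ₊₁ = bₖ x₀` only sees `x₀`, and
`(M (Mz)^d)₀ = (∑ aₖ bₖ^d) z₀^d`; so when that sum vanishes, `f = x + (Mx)^d` satisfies
`(Mf)₀ = (Mx)₀`, hence `f - (Mf)^d` agrees with `x` in coordinate `0` and has the same image
under `M` as `x`.
-/

theorem det_one_add_vecMulVec_add_vecMulVec {ι R : Type*} [Fintype ι] [DecidableEq ι]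
    [CommRing R] (u v w z : ι → R) :
    (1 + vecMulVec u v + vecMulVec w z).det =
      (1 + v ⬝ᵥ u) * (1 + z ⬝ᵥ w) - (v ⬝ᵥ w) * (z ⬝ᵥ u) := by
  have h : vecMulVec u v + vecMulVec w z = of (fun i => ![u i, w i]) * of ![v, z] := by
    ext i j
    simp [vecMulVec_apply, mul_apply, Fin.sum_univ_two]
  rw [add_assoc, h, det_one_add_mul_comm, det_fin_two]
  simp [vecMul, dotProduct, mul_comm]

section phiMap

variable {ι : Type*} [Fintype ι] [DecidableEq ι] (A : Matrix ι ι ℂ) {φ φ' : ℂ → ℂ}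

theorem hasFDerivAt_phiMap (hφ : ∀ z, HasDerivAt φ (φ' z) z) (x : ι → ℂ) :
    HasFDerivAt (phiMap A φ)
      (toLin' (1 + diagonal (fun j => φ' ((A *ᵥ x) j)) * A)).toContinuousLinearMap x := by
  refine hasFDerivAt_pi'' fun j => ?_
  have hAj : HasFDerivAt (fun y : ι → ℂ => (A *ᵥ y) j)
      ((LinearMap.proj j).comp (toLin' A)).toContinuousLinearMap x :=
    ((LinearMap.proj j).comp (toLin' A)).toContinuousLinearMap.hasFDerivAt
  refine ((hasFDerivAt_apply j x).add ((hφ _).comp_hasFDerivAt x hAj)).congr_fderiv ?_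
  ext v
  simp [-mulVec_mulVec, mulVec_diagonal]

theorem jacDet_phiMap (hφ : ∀ z, HasDerivAt φ (φ' z) z) (x : ι → ℂ) :
    jacDet (phiMap A φ) x = (1 + diagonal (fun j => φ' ((A *ᵥ x) j)) * A).det := by
  rw [jacDet, (hasFDerivAt_phiMap A hφ x).fderiv, LinearMap.toMatrix_eq_toMatrix',
    LinearMap.coe_toContinuousLinearMap, LinearMap.toMatrix'_toLin']

end phiMap

def crossMatrix {R : Type*} [Zero R] {n : ℕ} (a b : Fin n → R) :
    Matrix (Fin (n + 1)) (Fin (n + 1)) R :=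
  of (Fin.cons (Fin.cons 0 a) fun k => Fin.cons (b k) 0)

theorem eq_crossMatrix {R : Type*} [Zero R] {n : ℕ} {a b : Fin n → R}
    {M : Matrix (Fin (n + 1)) (Fin (n + 1)) R}
    (hM00 : M 0 0 = 0) (hMa : ∀ k : Fin n, M 0 k.succ = a k)
    (hMb : ∀ k : Fin n, M k.succ 0 = b k) (hMz : ∀ j k : Fin n, M j.succ k.succ = 0) :
    M = crossMatrix a b := by
  ext i j
  cases i using Fin.cases <;> cases j using Fin.cases <;> simp [crossMatrix, *]

namespace crossMatrix

variable {R : Type*} {n : ℕ}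

section Semiring

variable [NonUnitalNonAssocSemiring R] (a b : Fin n → R) (x : Fin (n + 1) → R)

theorem mulVec_zero : (crossMatrix a b *ᵥ x) 0 = ∑ k, a k * x k.succ := by
  simp [crossMatrix, mulVec, dotProduct, Fin.sum_univ_succ]

theorem mulVec_succ (k : Fin n) : (crossMatrix a b *ᵥ x) k.succ = b k * x 0 := by
  simp [crossMatrix, mulVec, dotProduct, Fin.sum_univ_succ]

end Semiring

theorem mulVec_pow_mulVec_zero [CommSemiring R] (a b : Fin n → R) (d : ℕ)
    (z : Fin (n + 1) → R) :
    (crossMatrix a b *ᵥ fun i => (crossMatrix a b *ᵥ z) i ^ d) 0 =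
      (∑ k, a k * b k ^ d) * z 0 ^ d := by
  simp only [mulVec_zero, mulVec_succ, mul_pow, Finset.sum_mul, mul_assoc]

theorem det_one_add_diagonal_mul [CommRing R] (a b : Fin n → R) (c : Fin (n + 1) → R) :
    (1 + diagonal c * crossMatrix a b).det = 1 - c 0 * ∑ k, a k * (c k.succ * b k) := by
  have h : diagonal c * crossMatrix a b =
      vecMulVec (Pi.single 0 (c 0)) (Fin.cons 0 a) +
        vecMulVec (Fin.cons 0 fun k => c k.succ * b k) (Pi.single 0 1) := by
    ext i j
    cases i using Fin.cases <;> cases j using Fin.cases <;>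
      simp [crossMatrix, vecMulVec_apply, Fin.succ_ne_zero]
  rw [h, ← add_assoc, det_one_add_vecMulVec_add_vecMulVec]
  simp [dotProduct, Fin.sum_univ_succ, mul_comm]

theorem jacDet_add_pow_mulVec (a b : Fin n → ℂ) {d : ℕ} (hd : d ≠ 0) (x : Fin (n + 1) → ℂ) :
    jacDet (fun y j => y j + (crossMatrix a b *ᵥ y) j ^ d) x =
      1 - (d : ℂ) ^ 2 * ((crossMatrix a b *ᵥ x) 0 * x 0) ^ (d - 1) * ∑ k, a k * b k ^ d := by
  obtain ⟨e, rfl⟩ : ∃ e, d = e + 1 := ⟨d - 1, by omega⟩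
  change jacDet (phiMap _ (· ^ (e + 1))) x = _
  rw [jacDet_phiMap _ (fun z => hasDerivAt_pow (e + 1) z), det_one_add_diagonal_mul]
  simp only [mulVec_succ, Finset.mul_sum, Nat.add_sub_cancel]
  congr 1
  refine Finset.sum_congr rfl fun k _ => ?_
  push_cast
  ring

theorem mulVec_sub_pow_mulVec_add_pow_mulVec [CommRing R] {a b : Fin n → R} {d : ℕ}
    (hS : ∑ k, a k * b k ^ d = 0) (x : Fin (n + 1) → R) :
    (crossMatrix a b *ᵥ fun i => (x i + (crossMatrix a b *ᵥ x) i ^ d) -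
        (crossMatrix a b *ᵥ fun l => x l + (crossMatrix a b *ᵥ x) l ^ d) i ^ d) =
      crossMatrix a b *ᵥ x := by
  set M := crossMatrix a b
  set f : Fin (n + 1) → R := fun l => x l + (M *ᵥ x) l ^ d with hf
  have hMf : (M *ᵥ f) 0 = (M *ᵥ x) 0 := by
    rw [hf, ← Pi.add_def, mulVec_add, Pi.add_apply, mulVec_pow_mulVec_zero, hS, zero_mul,
      add_zero]
  ext j
  cases j using Fin.cases with
  | zero =>
    rw [← Pi.sub_def, mulVec_sub, Pi.sub_apply, mulVec_pow_mulVec_zero, hS, zero_mul, sub_zero,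
      hMf]
  | succ k =>
    rw [mulVec_succ, mulVec_succ, hMf, add_sub_cancel_right]

end crossMatrix

theorem stmt18_general (n : ℕ) (a b : Fin n → ℂ) (d : ℕ) (hd : 1 ≤ d)
    (M : Matrix (Fin (n + 1)) (Fin (n + 1)) ℂ)
    (hM00 : M 0 0 = 0)
    (hMa : ∀ k : Fin n, M 0 k.succ = a k)
    (hMb : ∀ k : Fin n, M k.succ 0 = b k)
    (hMz : ∀ j k : Fin n, M j.succ k.succ = 0) :
    ((∀ x : Fin (n + 1) → ℂ, jacDet (fun y j => y j + (M.mulVec y j) ^ d) x = 1) ↔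
      ∑ k, a k * b k ^ d = 0) ∧
    (∑ k, a k * b k ^ d = 0 →
      ∀ x : Fin (n + 1) → ℂ, ∀ j,
        (x j + (M.mulVec x j) ^ d) -
          (M.mulVec (fun i =>
            (x i + (M.mulVec x i) ^ d) -
              (M.mulVec (fun l => x l + (M.mulVec x l) ^ d) i) ^ d) j) ^ d
          = x j) := by
  obtain rfl := eq_crossMatrix hM00 hMa hMb hMz
  have hd0 : d ≠ 0 := by omega
  refine ⟨⟨fun hjac => ?_, fun hS x => ?_⟩, fun hS x j => ?_⟩
  · by_contra hS
    obtain ⟨k, -, hk⟩ := Finset.exists_ne_zero_of_sum_ne_zero hS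
    set x : Fin (n + 1) → ℂ := Fin.cons 1 (Pi.single k (a k)⁻¹)
    have hMx : (crossMatrix a b *ᵥ x) 0 = 1 := by
      simp [x, crossMatrix.mulVec_zero, Pi.single_apply, left_ne_zero_of_mul hk]
    have h := hjac x
    rw [crossMatrix.jacDet_add_pow_mulVec a b hd0, hMx] at h
    simp [x, hd0, hS] at h
  · rw [crossMatrix.jacDet_add_pow_mulVec a b hd0, hS, mul_zero, sub_zero]
  · rw [crossMatrix.mulVec_sub_pow_mulVec_add_pow_mulVec hS, add_sub_cancel_right]

theorem stmt18 (n : ℕ) (hn : 1 ≤ n) (a b : Fin n → ℂ)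
    (ha : ∀ k, a k ≠ 0) (hb : ∀ k, b k ≠ 0) (d : ℕ) (hd : 1 ≤ d)
    (M : Matrix (Fin (n + 1)) (Fin (n + 1)) ℂ)
    (hM00 : M 0 0 = 0)
    (hMa : ∀ k : Fin n, M 0 k.succ = a k)
    (hMb : ∀ k : Fin n, M k.succ 0 = b k)
    (hMz : ∀ j k : Fin n, M j.succ k.succ = 0) :
    ((∀ x : Fin (n + 1) → ℂ, jacDet (fun y j => y j + (M.mulVec y j) ^ d) x = 1) ↔
      ∑ k, a k * b k ^ d = 0) ∧
    (∑ k, a k * b k ^ d = 0 →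
      ∀ x : Fin (n + 1) → ℂ, ∀ j,
        (x j + (M.mulVec x j) ^ d) -
          (M.mulVec (fun i =>
            (x i + (M.mulVec x i) ^ d) -
              (M.mulVec (fun l => x l + (M.mulVec x l) ^ d) i) ^ d) j) ^ d
          = x j) :=
  stmt18_general n a b d hd M hM00 hMa hMb hMz
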